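/- arXiv:math/0402022 — 3 statements merged into one kernel-verified Lean document; each statement's English description precedes it below -/
import Mathlib

section
/- The category of commutative n-algebras over a field k of characteristic zero has an initial object (C_n, λ_n): there exists a commutative unital k-algebra C_n together with a linear map λ_n : C_n^{⊗n} → C_n such that for every commutative n-algebra (A, α) there is a unique unital algebra homomorphism f : C_n → A satisfying α ∘ f^{⊗n} = f ∘ λ_n. -/
/-!
The initial `n`-algebra is the polynomial algebra on the set `T` of canonical trees, where a tree
is an `n`-tuple of monomials in trees, i.e. `T ≃ (Fin n → (T →₀ ℕ))`; the operation sends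
`x^{d₁} ⊗ ⋯ ⊗ x^{dₙ}` to the generator `x_{node d}`. A morphism to `(A, α)` is determined by its
values `g` on the generators, and the morphism condition becomes the recursion
`g (node d) = α (⊗ᵢ ∏ g ^ dᵢ)`, which has exactly one solution because trees are well-founded.
-/

open scoped TensorProduct

/-- A commutative `n`-algebra over `k`: a commutative unital `k`-algebra `A`
together with a linear map `α : A^{⊗n} → A`. -/
structure CommNAlgebra (k : Type) [CommRing k] (n : ℕ) : Type 1 where
  carrier : Type
  [isCommRing : CommRing carrier]
  [isAlgebra : Algebra k carrier]
  op : (⨂[k]^n carrier) →ₗ[k] carrier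

attribute [instance] CommNAlgebra.isCommRing CommNAlgebra.isAlgebra

/-- `f : C → A` is a morphism of `n`-algebras: a unital algebra homomorphism
with `α ∘ f^{⊗n} = f ∘ λ`. -/
def CommNAlgebra.IsHom {k : Type} [CommRing k] {n : ℕ} (C A : CommNAlgebra k n)
    (f : C.carrier →ₐ[k] A.carrier) : Prop :=
  A.op ∘ₗ (PiTensorProduct.map fun _ : Fin n => f.toLinearMap) = f.toLinearMap ∘ₗ C.op

open MvPolynomial PiTensorProduct

section FreeNAlgebra

variable {k : Type} [CommRing k] {n : ℕ} {T : Type}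

noncomputable def graft (node : (Fin n → (T →₀ ℕ)) → T) :
    (⨂[k]^n (MvPolynomial T k)) →ₗ[k] MvPolynomial T k :=
  (Basis.piTensorProduct fun _ => basisMonomials T k).constr k fun d => X (node d)

theorem graft_tprod_monomial (node : (Fin n → (T →₀ ℕ)) → T) (d : Fin n → (T →₀ ℕ)) :
    graft node (tprod k fun i => monomial (d i) (1 : k)) = X (node d) := by
  simpa [graft] using (Basis.piTensorProduct fun _ => basisMonomials T k).constr_basis k
    (fun d => (X (node d) : MvPolynomial T k)) d

noncomputable def freeNAlgebra (k : Type) [CommRing k] (node : (Fin n → (T →₀ ℕ)) → T) :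
    CommNAlgebra k n :=
  ⟨MvPolynomial T k, graft node⟩

theorem isHom_freeNAlgebra_aeval_iff (node : (Fin n → (T →₀ ℕ)) → T) (A : CommNAlgebra k n)
    (g : T → A.carrier) :
    (freeNAlgebra k node).IsHom A (aeval g) ↔
      ∀ d, g (node d) = A.op (tprod k fun i => (d i).prod fun s j => g s ^ j) := by
  have hop (d : Fin n → (T →₀ ℕ)) :
      (A.op ∘ₗ map fun _ => (aeval g).toLinearMap) (⨂ₜ[k] i, monomial (d i) 1) =
        A.op (tprod k fun i => (d i).prod fun s j => g s ^ j) := by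
    simp [aeval_monomial]
  have hgen (d : Fin n → (T →₀ ℕ)) :
      aeval g (graft node (⨂ₜ[k] i, monomial (d i) (1 : k))) = g (node d) := by
    rw [graft_tprod_monomial, aeval_X]
  constructor
  · intro h d
    exact (hgen d).symm.trans ((LinearMap.congr_fun h _).symm.trans (hop d))
  · intro h
    refine (Basis.piTensorProduct fun _ => basisMonomials T k).ext fun d => ?_
    simp only [Basis.piTensorProduct_apply, coe_basisMonomials]
    exact (hop d).trans ((h d).symm.trans (hgen d).symm)

theorem existsUnique_eq_op_prod_of_wellFounded {A : Type} [CommMonoid A]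
    (node : (Fin n → (T →₀ ℕ)) ≃ T)
    (hwf : WellFounded fun s t => ∃ i, s ∈ (node.symm t i).support) (op : (Fin n → A) → A) :
    ∃! g : T → A, ∀ d, g (node d) = op fun i => (d i).prod fun s j => g s ^ j := by
  classical
  -- the fallback `1` is never used: every `s` in a support is a child of `t`
  let g : T → A := hwf.fix fun t ih =>
    op fun i => (node.symm t i).prod fun s j => (if hs : _ then ih s hs else 1) ^ j
  have hg (d : Fin n → (T →₀ ℕ)) : g (node d) = op fun i => (d i).prod fun s j => g s ^ j := by
    rw [show g (node d) = _ from hwf.fix_eq _ _, node.symm_apply_apply]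
    congr 1
    funext i
    refine Finsupp.prod_congr fun s hs => ?_
    rw [dif_pos ⟨i, by simpa using hs⟩]
  refine ⟨g, hg, fun g' hg' => funext fun t => ?_⟩
  induction t using hwf.induction with | _ t ih => ?_
  obtain ⟨d, rfl⟩ := node.surjective t
  rw [hg', hg]
  congr 1
  funext i
  refine Finsupp.prod_congr fun s hs => ?_
  rw [ih s ⟨i, by simpa using hs⟩]

theorem existsUnique_isHom_freeNAlgebra (node : (Fin n → (T →₀ ℕ)) ≃ T)
    (hwf : WellFounded fun s t => ∃ i, s ∈ (node.symm t i).support) (A : CommNAlgebra k n) :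
    ∃! f : MvPolynomial T k →ₐ[k] A.carrier, (freeNAlgebra k node).IsHom A f := by
  obtain ⟨g, hg, hunique⟩ :=
    existsUnique_eq_op_prod_of_wellFounded node hwf fun x => A.op (tprod k x)
  refine ⟨aeval g, (isHom_freeNAlgebra_aeval_iff node A g).2 hg, fun f hf => ?_⟩
  rw [aeval_unique f] at hf ⊢
  rw [hunique _ ((isHom_freeNAlgebra_aeval_iff node A _).1 hf)]

end FreeNAlgebra

inductive PreTree : Type
  | node : List (List PreTree) → PreTree

/-- Each list of children must be the representative `Multiset.toList` of its multiset, so that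
canonical trees correspond exactly to `n`-tuples of finite multisets of canonical trees. -/
inductive PreTree.Canonical (n : ℕ) : PreTree → Prop
  | node (ll : List (List PreTree)) (hlength : ll.length = n)
      (hrepr : ∀ l ∈ ll, (l : Multiset PreTree).toList = l)
      (hchildren : ∀ l ∈ ll, ∀ t ∈ l, Canonical n t) : Canonical n (.node ll)

abbrev CTree (n : ℕ) : Type := {t : PreTree // t.Canonical n}

namespace CTree

variable {n : ℕ}

noncomputable def node (d : Fin n → (CTree n →₀ ℕ)) : CTree n :=
  ⟨.node (List.ofFn fun i => ((d i).toMultiset.map Subtype.val).toList), by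
    refine .node _ List.length_ofFn (fun l hl => ?_) (fun l hl t ht => ?_)
    · obtain ⟨i, rfl⟩ := List.mem_ofFn.mp hl
      rw [Multiset.coe_toList]
    · obtain ⟨i, rfl⟩ := List.mem_ofFn.mp hl
      obtain ⟨s, -, rfl⟩ := Multiset.mem_map.mp (Multiset.mem_toList.mp ht)
      exact s.2⟩

theorem node_injective : Function.Injective (node (n := n)) := by
  classical
  intro d d' h
  have hlists := List.ofFn_injective (PreTree.node.inj (congrArg Subtype.val h))
  funext i
  refine Function.LeftInverse.injective Finsupp.toMultiset_toFinsupp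
    (Multiset.map_injective Subtype.val_injective ?_)
  simpa only [Multiset.coe_toList] using
    congrArg (fun l : List PreTree => (l : Multiset PreTree)) (congrFun hlists i)

theorem node_surjective : Function.Surjective (node (n := n)) := by
  rintro ⟨_, ⟨ll, hlength, hrepr, hchildren⟩⟩
  subst hlength
  classical
  refine ⟨fun i => Multiset.toFinsupp ((ll.get i : Multiset PreTree).pmap Subtype.mk
    fun t ht => hchildren _ (ll.get_mem i) t ht), Subtype.ext ?_⟩
  show PreTree.node _ = PreTree.node ll
  congr 1
  conv_rhs => rw [← List.ofFn_get ll]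
  congr 1
  funext i
  rw [Multiset.toFinsupp_toMultiset, Multiset.map_pmap, Multiset.pmap_eq_map, Multiset.map_id',
    hrepr _ (ll.get_mem i)]

noncomputable def nodeEquiv : (Fin n → (CTree n →₀ ℕ)) ≃ CTree n :=
  .ofBijective node ⟨node_injective, node_surjective⟩

theorem sizeOf_lt_of_mem_support {d : Fin n → (CTree n →₀ ℕ)} {i : Fin n} {s : CTree n}
    (hs : s ∈ (d i).support) : sizeOf s.1 < sizeOf (node d).1 := by
  let children (i : Fin n) : List PreTree := ((d i).toMultiset.map Subtype.val).toList
  have hs : s.1 ∈ children i :=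
    Multiset.mem_toList.mpr (Multiset.mem_map.mpr ⟨s, (Finsupp.mem_toMultiset _ _).mpr hs, rfl⟩)
  have hi : children i ∈ List.ofFn children := List.mem_ofFn.mpr ⟨i, rfl⟩
  have := List.sizeOf_lt_of_mem hs
  have := List.sizeOf_lt_of_mem hi
  show sizeOf s.1 < sizeOf (PreTree.node (List.ofFn children))
  rw [PreTree.node.sizeOf_spec]
  omega

theorem wellFounded_mem_support :
    WellFounded fun s t : CTree n => ∃ i, s ∈ (nodeEquiv.symm t i).support := by
  refine Subrelation.wf (fun {s t} ⟨i, hs⟩ => ?_)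
    (InvImage.wf (fun t : CTree n => sizeOf t.1) wellFounded_lt)
  have := sizeOf_lt_of_mem_support hs
  rwa [show node _ = t from nodeEquiv.apply_symm_apply t] at this

end CTree

theorem exists_initial_commNAlgebra_general (k : Type) [Field k] (n : ℕ) :
    ∃ C : CommNAlgebra k n, ∀ A : CommNAlgebra k n,
      ∃! f : C.carrier →ₐ[k] A.carrier, C.IsHom A f :=
  ⟨freeNAlgebra k CTree.nodeEquiv, existsUnique_isHom_freeNAlgebra _ CTree.wellFounded_mem_support⟩

/-- The category of commutative `n`-algebras over a field `k`
of characteristic zero has an initial object `(C_n, λ_n)`: there is a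
commutative unital `k`-algebra `C_n` with a linear map
`λ_n : C_n^{⊗n} → C_n` such that every commutative `n`-algebra `(A, α)`
admits a unique unital algebra homomorphism `f : C_n → A` satisfying
`α ∘ f^{⊗n} = f ∘ λ_n`. -/
theorem exists_initial_commNAlgebra (k : Type) [Field k] [CharZero k] (n : ℕ) :
    ∃ C : CommNAlgebra k n, ∀ A : CommNAlgebra k n,
      ∃! f : C.carrier →ₐ[k] A.carrier, C.IsHom A f :=
  exists_initial_commNAlgebra_general k n
end

section
/- Let (C_n, λ) be the initial commutative n-algebra, with augmentation ε : C_n → k the unique morphism of n-algebras to (k, 0), and for linear maps σ_1, σ_2 : C_n^{⊗n} → C_n let Δ : C_n → C_n ⊗ C_n be the unique algebra morphism with Δ ∘ λ = (σ_1, σ_2) ∘ Δ^{⊗n}. If both σ_i satisfy ε ∘ σ_i = ε^{⊗n} and Δ ∘ σ_i = (σ_i ⊗ σ_i) ∘ τ ∘ Δ^{⊗n}, then there exists a unique bialgebra structure on C_n with coproduct Δ and counit ε, i.e. such that Δ ∘ λ = (σ_1, σ_2) ∘ Δ^{⊗n} and ε ∘ λ = 0. -/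
/-!
Everything follows from initiality of `(C, λ)`: two algebra maps out of `C` that intertwine `λ`
with the same operation on their target coincide. The composites `(ε ⊗ id) ∘ Δ` and
`(id ⊗ ε) ∘ Δ` intertwine `λ` with itself, because `ε ∘ σᵢ = ε^{⊗n}` and `ε ∘ λ = 0` kill all but
one summand of `(σ₁, σ₂)`; so they are the identity. Using `Δ ∘ σᵢ = (σᵢ ⊗ σᵢ) ∘ τ ∘ Δ^{⊗n}`, both
`(Δ ⊗ id) ∘ Δ` and `(id ⊗ Δ) ∘ Δ` intertwine `λ` with the operation
`σ₁ ⊗ (σ₁, σ₂) + λ ⊗ (σ₂ ⊗ σ₂)` on `C ⊗ (C ⊗ C)`, which gives coassociativity.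
-/

open PiTensorProduct TensorProduct

theorem Algebra.TensorProduct.prod_tmul_prod {R A B κ : Type*} [CommSemiring R]
    [CommSemiring A] [Algebra R A] [CommSemiring B] [Algebra R B] (s : Finset κ)
    (x : κ → A) (y : κ → B) :
    (∏ i ∈ s, x i) ⊗ₜ[R] (∏ i ∈ s, y i) = ∏ i ∈ s, x i ⊗ₜ[R] y i := by
  classical
  induction s using Finset.induction_on with
  | empty => simp [Algebra.TensorProduct.one_def]
  | insert _ _ h ih => simp only [Finset.prod_insert h, ← ih, Algebra.TensorProduct.tmul_mul_tmul]

namespace PiTensorProduct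

variable {R : Type*} [CommSemiring R] {ι : Type*}

section Ext

variable [Finite ι] {M N P Q : Type*} [AddCommMonoid M] [Module R M] [AddCommMonoid N]
  [Module R N] [AddCommMonoid P] [Module R P] [AddCommMonoid Q] [Module R Q]

theorem ext_tmul {φ φ' : (⨂[R] _ : ι, M ⊗[R] N) →ₗ[R] Q}
    (h : ∀ (a : ι → M) (b : ι → N),
      φ (tprod R fun i => a i ⊗ₜ[R] b i) = φ' (tprod R fun i => a i ⊗ₜ[R] b i)) :
    φ = φ' :=
  ext_of_span_eq_top (g := fun _ (x : M × N) => x.1 ⊗ₜ[R] x.2)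
    (fun _ => by simpa [Set.range, eq_comm] using span_tmul_eq_top R M N)
    fun x => h (fun i => (x i).1) fun i => (x i).2

theorem span_range_tmul_tmul :
    Submodule.span R (Set.range fun x : M × N × P => (x.1 ⊗ₜ[R] x.2.1) ⊗ₜ[R] x.2.2) = ⊤ := by
  rw [eq_top_iff, ← span_tmul_eq_top R (M ⊗[R] N) P, Submodule.span_le]
  rintro _ ⟨t, z, rfl⟩
  induction t using TensorProduct.induction_on with
  | zero => simp
  | tmul x y => exact Submodule.subset_span ⟨(x, y, z), rfl⟩
  | add u v hu hv => rw [add_tmul]; exact add_mem hu hv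

theorem ext_tmul_tmul {φ φ' : (⨂[R] _ : ι, (M ⊗[R] N) ⊗[R] P) →ₗ[R] Q}
    (h : ∀ (a : ι → M) (b : ι → N) (c : ι → P),
      φ (tprod R fun i => (a i ⊗ₜ[R] b i) ⊗ₜ[R] c i)
        = φ' (tprod R fun i => (a i ⊗ₜ[R] b i) ⊗ₜ[R] c i)) :
    φ = φ' :=
  ext_of_span_eq_top (g := fun _ (x : M × N × P) => (x.1 ⊗ₜ[R] x.2.1) ⊗ₜ[R] x.2.2)
    (fun _ => span_range_tmul_tmul)
    fun x => h (fun i => (x i).1) (fun i => (x i).2.1) fun i => (x i).2.2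

end Ext

section Split

variable [Fintype ι] [DecidableEq ι] {A B : Type*} [CommSemiring A] [Algebra R A]
  [CommSemiring B] [Algebra R B]

variable (R ι A B) in
noncomputable def splitTmul :
    (⨂[R] _ : ι, A ⊗[R] B) →ₗ[R] (⨂[R] _ : ι, A) ⊗[R] (⨂[R] _ : ι, B) :=
  lift <| (MultilinearMap.mkPiAlgebra R ι _).compLinearMap fun i =>
    TensorProduct.map (singleAlgHom (A := fun _ => A) i).toLinearMap
      (singleAlgHom (A := fun _ => B) i).toLinearMap

@[simp]
theorem splitTmul_tprod (a : ι → A) (b : ι → B) :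
    splitTmul R ι A B (tprod R fun i => a i ⊗ₜ[R] b i) = tprod R a ⊗ₜ[R] tprod R b := by
  simp only [splitTmul, lift.tprod, MultilinearMap.compLinearMap_apply,
    MultilinearMap.mkPiAlgebra_apply, map_tmul, AlgHom.toLinearMap_apply, singleAlgHom_apply]
  rw [← Algebra.TensorProduct.prod_tmul_prod, ← tprod_prod, ← tprod_prod]
  simp only [MonoidHom.mulSingle_apply, Finset.univ_prod_mulSingle]

end Split

section Ops

variable {A B C : Type*} [AddCommMonoid A] [Module R A] [AddCommMonoid B] [Module R B]
  [AddCommMonoid C] [Module R C]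

def Intertwines (f : A →ₗ[R] B) (α : (⨂[R] _ : ι, A) →ₗ[R] A) (β : (⨂[R] _ : ι, B) →ₗ[R] B) :
    Prop :=
  f ∘ₗ α = β ∘ₗ map fun _ => f

theorem intertwines_zero_iff {f : A →ₗ[R] B} {α : (⨂[R] _ : ι, A) →ₗ[R] A} :
    Intertwines f α 0 ↔ f ∘ₗ α = 0 := by
  simp [Intertwines]

namespace Intertwines

variable {f : A →ₗ[R] B} {g : B →ₗ[R] C} {α α' : (⨂[R] _ : ι, A) →ₗ[R] A}
  {β β' : (⨂[R] _ : ι, B) →ₗ[R] B} {γ : (⨂[R] _ : ι, C) →ₗ[R] C}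

theorem apply_tprod (h : Intertwines f α β) (x : ι → A) :
    f (α (tprod R x)) = β (tprod R fun i => f (x i)) := by
  simpa using LinearMap.congr_fun h (tprod R x)

theorem id (α : (⨂[R] _ : ι, A) →ₗ[R] A) : Intertwines LinearMap.id α α := by
  simp [Intertwines, map_id]

theorem comp (hg : Intertwines g β γ) (hf : Intertwines f α β) : Intertwines (g ∘ₗ f) α γ := by
  rw [Intertwines, map_comp, LinearMap.comp_assoc, hf, ← LinearMap.comp_assoc, hg,
    LinearMap.comp_assoc]

theorem add (h : Intertwines f α β) (h' : Intertwines f α' β') :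
    Intertwines f (α + α') (β + β') := by
  rw [Intertwines, LinearMap.comp_add, LinearMap.add_comp, h, h']

end Intertwines

variable [Fintype ι] in
theorem intertwines_constantBaseRingEquiv {f : A →ₗ[R] R} {σ : (⨂[R] _ : ι, A) →ₗ[R] A}
    (h : ∀ x, f (σ (tprod R x)) = ∏ i, f (x i)) :
    Intertwines f σ (constantBaseRingEquiv ι R).toLinearMap :=
  ext <| MultilinearMap.ext fun x => by simp [h]

end Ops

section TensorOp

variable [Fintype ι] [DecidableEq ι] {A A₂ B B₂ C : Type*}
  [CommSemiring A] [Algebra R A] [CommSemiring A₂] [Algebra R A₂]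
  [CommSemiring B] [Algebra R B] [CommSemiring B₂] [Algebra R B₂]
  [CommSemiring C] [Algebra R C]
  {M N : Type*} [AddCommMonoid M] [Module R M] [AddCommMonoid N] [Module R N]

noncomputable def tensorOp (α : (⨂[R] _ : ι, A) →ₗ[R] M) (β : (⨂[R] _ : ι, B) →ₗ[R] N) :
    (⨂[R] _ : ι, A ⊗[R] B) →ₗ[R] M ⊗[R] N :=
  TensorProduct.map α β ∘ₗ splitTmul R ι A B

@[simp]
theorem tensorOp_tprod (α : (⨂[R] _ : ι, A) →ₗ[R] M) (β : (⨂[R] _ : ι, B) →ₗ[R] N)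
    (a : ι → A) (b : ι → B) :
    tensorOp α β (tprod R fun i => a i ⊗ₜ[R] b i) = α (tprod R a) ⊗ₜ[R] β (tprod R b) := by
  simp [tensorOp]

theorem tensorOp_add_left (α α' : (⨂[R] _ : ι, A) →ₗ[R] M) (β : (⨂[R] _ : ι, B) →ₗ[R] N) :
    tensorOp (α + α') β = tensorOp α β + tensorOp α' β := by
  simp [tensorOp, map_add_left, LinearMap.add_comp]

theorem tensorOp_add_right (α : (⨂[R] _ : ι, A) →ₗ[R] M) (β β' : (⨂[R] _ : ι, B) →ₗ[R] N) :
    tensorOp α (β + β') = tensorOp α β + tensorOp α β' := by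
  simp [tensorOp, map_add_right, LinearMap.add_comp]

@[simp]
theorem tensorOp_zero_left (β : (⨂[R] _ : ι, B) →ₗ[R] N) :
    tensorOp (0 : (⨂[R] _ : ι, A) →ₗ[R] M) β = 0 := by
  simp [tensorOp]

@[simp]
theorem tensorOp_zero_right (α : (⨂[R] _ : ι, A) →ₗ[R] M) :
    tensorOp α (0 : (⨂[R] _ : ι, B) →ₗ[R] N) = 0 := by
  simp [tensorOp]

theorem splitTmul_eq_of_tprod
    (τ : (⨂[R] _ : ι, A ⊗[R] B) →ₗ[R] (⨂[R] _ : ι, A) ⊗[R] (⨂[R] _ : ι, B))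
    (hτ : ∀ a b, τ (tprod R fun i => a i ⊗ₜ[R] b i) = tprod R a ⊗ₜ[R] tprod R b) :
    splitTmul R ι A B = τ :=
  ext_tmul fun a b => by rw [splitTmul_tprod, hτ]

theorem Intertwines.tensorMap {f : A →ₗ[R] A₂} {g : B →ₗ[R] B₂} {α : (⨂[R] _ : ι, A) →ₗ[R] A}
    {α₂ : (⨂[R] _ : ι, A₂) →ₗ[R] A₂} {β : (⨂[R] _ : ι, B) →ₗ[R] B}
    {β₂ : (⨂[R] _ : ι, B₂) →ₗ[R] B₂} (hf : Intertwines f α α₂) (hg : Intertwines g β β₂) :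
    Intertwines (TensorProduct.map f g) (tensorOp α β) (tensorOp α₂ β₂) :=
  ext_tmul fun a b => by simp [hf.apply_tprod, hg.apply_tprod]

theorem intertwines_assoc (α : (⨂[R] _ : ι, A) →ₗ[R] A) (β : (⨂[R] _ : ι, B) →ₗ[R] B)
    (γ : (⨂[R] _ : ι, C) →ₗ[R] C) :
    Intertwines (TensorProduct.assoc R A B C).toLinearMap (tensorOp (tensorOp α β) γ)
      (tensorOp α (tensorOp β γ)) :=
  ext_tmul_tmul fun a b c => by simp

theorem intertwines_lid (α : (⨂[R] _ : ι, A) →ₗ[R] A) :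
    Intertwines (TensorProduct.lid R A).toLinearMap
      (tensorOp (constantBaseRingEquiv ι R).toLinearMap α) α :=
  ext_tmul fun r a => by simp [MultilinearMap.map_smul_univ]

theorem intertwines_rid (α : (⨂[R] _ : ι, A) →ₗ[R] A) :
    Intertwines (TensorProduct.rid R A).toLinearMap
      (tensorOp α (constantBaseRingEquiv ι R).toLinearMap) α :=
  ext_tmul fun a r => by simp [MultilinearMap.map_smul_univ]

/-- The operation `(σ₁, σ₂)` on `A ⊗ A` determined by `(A, α)`. -/
noncomputable def pairOp (α σ₁ σ₂ : (⨂[R] _ : ι, A) →ₗ[R] A) :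
    (⨂[R] _ : ι, A ⊗[R] A) →ₗ[R] A ⊗[R] A :=
  tensorOp σ₁ α + tensorOp α σ₂

end TensorOp

end PiTensorProduct

section Bialgebra

variable {R ι : Type*} [CommRing R]

def IsInitialOp {C : Type} [CommRing C] [Algebra R C] (lam : (⨂[R] _ : ι, C) →ₗ[R] C) : Prop :=
  ∀ (A : Type) (_ : CommRing A) (_ : Algebra R A) (α : (⨂[R] _ : ι, A) →ₗ[R] A),
    ∃! f : C →ₐ[R] A, α ∘ₗ (map fun _ => f.toLinearMap) = f.toLinearMap ∘ₗ lam

namespace IsInitialOp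

variable {C : Type} [CommRing C] [Algebra R C] {lam : (⨂[R] _ : ι, C) →ₗ[R] C}
  (hinit : IsInitialOp lam)
include hinit

theorem algHom_ext {A : Type} [CommRing A] [Algebra R A] {α : (⨂[R] _ : ι, A) →ₗ[R] A}
    {f g : C →ₐ[R] A} (hf : Intertwines f.toLinearMap lam α)
    (hg : Intertwines g.toLinearMap lam α) : f = g :=
  (hinit A _ _ α).unique hf.symm hg.symm

theorem eq_id {f : C →ₐ[R] C} (hf : Intertwines f.toLinearMap lam lam) : f = AlgHom.id R C :=
  hinit.algHom_ext hf (Intertwines.id lam)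

variable [Fintype ι] [DecidableEq ι]

variable {σ₁ σ₂ : (⨂[R] _ : ι, C) →ₗ[R] C} {Δ : C →ₐ[R] C ⊗[R] C} {ε : C →ₐ[R] R}
  (hΔ : Intertwines Δ.toLinearMap lam (pairOp lam σ₁ σ₂))
include hΔ

theorem lid_counit_comp_comul (hε : Intertwines ε.toLinearMap lam 0)
    (hσ₁ : Intertwines ε.toLinearMap σ₁ (constantBaseRingEquiv ι R).toLinearMap) :
    (TensorProduct.lid R C).toLinearMap ∘ₗ TensorProduct.map ε.toLinearMap LinearMap.id
      ∘ₗ Δ.toLinearMap = LinearMap.id := by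
  have h : Intertwines (TensorProduct.map ε.toLinearMap LinearMap.id) (pairOp lam σ₁ σ₂)
      (tensorOp (constantBaseRingEquiv ι R).toLinearMap lam) := by
    simpa [pairOp] using
      (hσ₁.tensorMap (Intertwines.id lam)).add (hε.tensorMap (Intertwines.id σ₂))
  have := hinit.eq_id (f := (Algebra.TensorProduct.lid R C).toAlgHom.comp
    ((Algebra.TensorProduct.map ε (AlgHom.id R C)).comp Δ))
    (((intertwines_lid lam).comp h).comp hΔ)
  exact congrArg AlgHom.toLinearMap this

theorem rid_counit_comp_comul (hε : Intertwines ε.toLinearMap lam 0)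
    (hσ₂ : Intertwines ε.toLinearMap σ₂ (constantBaseRingEquiv ι R).toLinearMap) :
    (TensorProduct.rid R C).toLinearMap ∘ₗ TensorProduct.map LinearMap.id ε.toLinearMap
      ∘ₗ Δ.toLinearMap = LinearMap.id := by
  have h : Intertwines (TensorProduct.map LinearMap.id ε.toLinearMap) (pairOp lam σ₁ σ₂)
      (tensorOp lam (constantBaseRingEquiv ι R).toLinearMap) := by
    simpa [pairOp] using
      ((Intertwines.id σ₁).tensorMap hε).add ((Intertwines.id lam).tensorMap hσ₂)
  have := hinit.eq_id (f := (Algebra.TensorProduct.rid R R C).toAlgHom.comp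
    ((Algebra.TensorProduct.map (AlgHom.id R C) ε).comp Δ))
    (((intertwines_rid lam).comp h).comp hΔ)
  exact congrArg AlgHom.toLinearMap this

theorem coassoc (hσ₁ : Intertwines Δ.toLinearMap σ₁ (tensorOp σ₁ σ₁))
    (hσ₂ : Intertwines Δ.toLinearMap σ₂ (tensorOp σ₂ σ₂)) :
    (TensorProduct.assoc R C C C).toLinearMap ∘ₗ TensorProduct.map Δ.toLinearMap LinearMap.id
      ∘ₗ Δ.toLinearMap = TensorProduct.map LinearMap.id Δ.toLinearMap ∘ₗ Δ.toLinearMap := by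
  have hright : Intertwines (TensorProduct.map LinearMap.id Δ.toLinearMap) (pairOp lam σ₁ σ₂)
      (tensorOp σ₁ (pairOp lam σ₁ σ₂) + tensorOp lam (tensorOp σ₂ σ₂)) :=
    ((Intertwines.id σ₁).tensorMap hΔ).add ((Intertwines.id lam).tensorMap hσ₂)
  have hleft : Intertwines (TensorProduct.map Δ.toLinearMap LinearMap.id) (pairOp lam σ₁ σ₂)
      (tensorOp (tensorOp σ₁ σ₁) lam + tensorOp (pairOp lam σ₁ σ₂) σ₂) :=
    (hσ₁.tensorMap (Intertwines.id lam)).add (hΔ.tensorMap (Intertwines.id σ₂))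
  have hassoc : Intertwines (TensorProduct.assoc R C C C).toLinearMap
      (tensorOp (tensorOp σ₁ σ₁) lam + tensorOp (pairOp lam σ₁ σ₂) σ₂)
      (tensorOp σ₁ (pairOp lam σ₁ σ₂) + tensorOp lam (tensorOp σ₂ σ₂)) := by
    simp only [pairOp, tensorOp_add_left, tensorOp_add_right, ← add_assoc]
    exact ((intertwines_assoc _ _ _).add (intertwines_assoc _ _ _)).add (intertwines_assoc _ _ _)
  have := hinit.algHom_ext
    (f := (Algebra.TensorProduct.assoc R R R C C C).toAlgHom.comp
      ((Algebra.TensorProduct.map Δ (AlgHom.id R C)).comp Δ))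
    (g := (Algebra.TensorProduct.map (AlgHom.id R C) Δ).comp Δ)
    ((hassoc.comp hleft).comp hΔ) (hright.comp hΔ)
  exact congrArg AlgHom.toLinearMap this

end IsInitialOp

end Bialgebra

open PiTensorProduct TensorProduct in
theorem unique_bialgebra_structure_on_initial_general
    (k : Type) [Field k] (n : ℕ)
    (C : Type) [CommRing C] [Algebra k C]
    (lam : (⨂[k]^n C) →ₗ[k] C)
    -- initiality of `(C, lam)`
    (hinit : ∀ (A : Type) (_ : CommRing A) (_ : Algebra k A)
      (α : (⨂[k]^n A) →ₗ[k] A),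
      ∃! f : C →ₐ[k] A,
        α ∘ₗ (PiTensorProduct.map fun _ : Fin n => f.toLinearMap)
          = f.toLinearMap ∘ₗ lam)
    -- the augmentation: the unique morphism of `n`-algebras `(C, λ) → (k, 0)`
    (ε : C →ₐ[k] k) (hε : ε.toLinearMap ∘ₗ lam = 0)
    -- the isomorphism `τ` separating first and second tensor factors
    (τ : (⨂[k]^n (C ⊗[k] C)) ≃ₗ[k] (⨂[k]^n C) ⊗[k] (⨂[k]^n C))
    (hτ : ∀ a b : Fin n → C,
      τ (tprod k fun i => a i ⊗ₜ[k] b i) = (tprod k a) ⊗ₜ[k] (tprod k b))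
    (σ₁ σ₂ : (⨂[k]^n C) →ₗ[k] C)
    -- `Δ` is the unique algebra morphism with `Δ ∘ λ = (σ₁, σ₂) ∘ Δ^{⊗n}`
    (Δ : C →ₐ[k] C ⊗[k] C)
    (hΔ : Δ.toLinearMap ∘ₗ lam
      = ((TensorProduct.map σ₁ lam + TensorProduct.map lam σ₂) ∘ₗ τ.toLinearMap)
          ∘ₗ (PiTensorProduct.map fun _ : Fin n => Δ.toLinearMap))
    -- `ε ∘ σᵢ = ε^{⊗n}`
    (hσ₁ε : ∀ x : Fin n → C, ε (σ₁ (tprod k x)) = ∏ j, ε (x j))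
    (hσ₂ε : ∀ x : Fin n → C, ε (σ₂ (tprod k x)) = ∏ j, ε (x j))
    -- `Δ ∘ σᵢ = (σᵢ ⊗ σᵢ) ∘ τ ∘ Δ^{⊗n}`
    (hσ₁Δ : Δ.toLinearMap ∘ₗ σ₁
      = (TensorProduct.map σ₁ σ₁) ∘ₗ τ.toLinearMap
          ∘ₗ (PiTensorProduct.map fun _ : Fin n => Δ.toLinearMap))
    (hσ₂Δ : Δ.toLinearMap ∘ₗ σ₂
      = (TensorProduct.map σ₂ σ₂) ∘ₗ τ.toLinearMap
          ∘ₗ (PiTensorProduct.map fun _ : Fin n => Δ.toLinearMap)) :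
    ∃! p : (C →ₐ[k] C ⊗[k] C) × (C →ₐ[k] k),
      -- `Δ ∘ λ = (σ₁, σ₂) ∘ Δ^{⊗n}`
      (p.1.toLinearMap ∘ₗ lam
        = ((TensorProduct.map σ₁ lam + TensorProduct.map lam σ₂) ∘ₗ τ.toLinearMap)
            ∘ₗ (PiTensorProduct.map fun _ : Fin n => p.1.toLinearMap)) ∧
      -- `ε ∘ λ = 0`
      (p.2.toLinearMap ∘ₗ lam = 0) ∧
      -- coassociativity
      ((TensorProduct.assoc k C C C).toLinearMap
          ∘ₗ (TensorProduct.map p.1.toLinearMap LinearMap.id) ∘ₗ p.1.toLinearMap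
        = (TensorProduct.map LinearMap.id p.1.toLinearMap) ∘ₗ p.1.toLinearMap) ∧
      -- counit laws
      ((TensorProduct.lid k C).toLinearMap
          ∘ₗ (TensorProduct.map p.2.toLinearMap LinearMap.id) ∘ₗ p.1.toLinearMap
        = LinearMap.id) ∧
      ((TensorProduct.rid k C).toLinearMap
          ∘ₗ (TensorProduct.map LinearMap.id p.2.toLinearMap) ∘ₗ p.1.toLinearMap
        = LinearMap.id) := by
  have hsplit : τ.toLinearMap = splitTmul k (Fin n) C C :=
    (splitTmul_eq_of_tprod _ fun a b => by simpa using hτ a b).symm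
  have hpair : (TensorProduct.map σ₁ lam + TensorProduct.map lam σ₂) ∘ₗ τ.toLinearMap
      = pairOp lam σ₁ σ₂ := by
    rw [hsplit, LinearMap.add_comp]; rfl
  rw [hpair] at hΔ ⊢
  rw [hsplit] at hσ₁Δ hσ₂Δ
  have hC : IsInitialOp lam := hinit
  have hε₀ : Intertwines ε.toLinearMap lam 0 := intertwines_zero_iff.mpr hε
  refine ⟨(Δ, ε), ⟨hΔ, hε, hC.coassoc hΔ hσ₁Δ hσ₂Δ,
    hC.lid_counit_comp_comul hΔ hε₀ (intertwines_constantBaseRingEquiv hσ₁ε),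
    hC.rid_counit_comp_comul hΔ hε₀ (intertwines_constantBaseRingEquiv hσ₂ε)⟩, ?_⟩
  rintro ⟨Δ', ε'⟩ ⟨hΔ', hε', -⟩
  exact Prod.ext (hC.algHom_ext hΔ' hΔ)
    (hC.algHom_ext (intertwines_zero_iff.mpr hε') hε₀)

open PiTensorProduct TensorProduct in
/-- Let `(C, λ)` be the initial commutative `n`-algebra over
a field `k` of characteristic zero (`hinit`), let `ε : C → k` be the unique
morphism of `n`-algebras to `(k, 0)` (i.e. the algebra map with `ε ∘ λ = 0`),
let `τ : (C ⊗ C)^{⊗ n} ≃ (C^{⊗n}) ⊗ (C^{⊗n})` be the isomorphism separating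
the first and second tensor factors, let `σ₁, σ₂ : C^{⊗n} → C` be linear maps
and let `Δ : C → C ⊗ C` be the unique algebra morphism with
`Δ ∘ λ = (σ₁, σ₂) ∘ Δ^{⊗n}`, where `(σ₁, σ₂) = (σ₁ ⊗ λ + λ ⊗ σ₂) ∘ τ`.
If both `σᵢ` satisfy `ε ∘ σᵢ = ε^{⊗n}` and
`Δ ∘ σᵢ = (σᵢ ⊗ σᵢ) ∘ τ ∘ Δ^{⊗n}`, then there is a unique bialgebra structure
on `C` (a pair of algebra morphisms: a coassociative counital comultiplication
and a counit) such that `Δ ∘ λ = (σ₁, σ₂) ∘ Δ^{⊗n}` and `ε ∘ λ = 0`. -/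
theorem unique_bialgebra_structure_on_initial
    (k : Type) [Field k] [CharZero k] (n : ℕ)
    (C : Type) [CommRing C] [Algebra k C]
    (lam : (⨂[k]^n C) →ₗ[k] C)
    -- initiality of `(C, lam)`
    (hinit : ∀ (A : Type) (_ : CommRing A) (_ : Algebra k A)
      (α : (⨂[k]^n A) →ₗ[k] A),
      ∃! f : C →ₐ[k] A,
        α ∘ₗ (PiTensorProduct.map fun _ : Fin n => f.toLinearMap)
          = f.toLinearMap ∘ₗ lam)
    -- the augmentation: the unique morphism of `n`-algebras `(C, λ) → (k, 0)`
    (ε : C →ₐ[k] k) (hε : ε.toLinearMap ∘ₗ lam = 0)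
    -- the isomorphism `τ` separating first and second tensor factors
    (τ : (⨂[k]^n (C ⊗[k] C)) ≃ₗ[k] (⨂[k]^n C) ⊗[k] (⨂[k]^n C))
    (hτ : ∀ a b : Fin n → C,
      τ (tprod k fun i => a i ⊗ₜ[k] b i) = (tprod k a) ⊗ₜ[k] (tprod k b))
    (σ₁ σ₂ : (⨂[k]^n C) →ₗ[k] C)
    -- `Δ` is the unique algebra morphism with `Δ ∘ λ = (σ₁, σ₂) ∘ Δ^{⊗n}`
    (Δ : C →ₐ[k] C ⊗[k] C)
    (hΔ : Δ.toLinearMap ∘ₗ lam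
      = ((TensorProduct.map σ₁ lam + TensorProduct.map lam σ₂) ∘ₗ τ.toLinearMap)
          ∘ₗ (PiTensorProduct.map fun _ : Fin n => Δ.toLinearMap))
    -- `ε ∘ σᵢ = ε^{⊗n}`
    (hσ₁ε : ∀ x : Fin n → C, ε (σ₁ (tprod k x)) = ∏ j, ε (x j))
    (hσ₂ε : ∀ x : Fin n → C, ε (σ₂ (tprod k x)) = ∏ j, ε (x j))
    -- `Δ ∘ σᵢ = (σᵢ ⊗ σᵢ) ∘ τ ∘ Δ^{⊗n}`
    (hσ₁Δ : Δ.toLinearMap ∘ₗ σ₁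
      = (TensorProduct.map σ₁ σ₁) ∘ₗ τ.toLinearMap
          ∘ₗ (PiTensorProduct.map fun _ : Fin n => Δ.toLinearMap))
    (hσ₂Δ : Δ.toLinearMap ∘ₗ σ₂
      = (TensorProduct.map σ₂ σ₂) ∘ₗ τ.toLinearMap
          ∘ₗ (PiTensorProduct.map fun _ : Fin n => Δ.toLinearMap)) :
    ∃! p : (C →ₐ[k] C ⊗[k] C) × (C →ₐ[k] k),
      -- `Δ ∘ λ = (σ₁, σ₂) ∘ Δ^{⊗n}`
      (p.1.toLinearMap ∘ₗ lam
        = ((TensorProduct.map σ₁ lam + TensorProduct.map lam σ₂) ∘ₗ τ.toLinearMap)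
            ∘ₗ (PiTensorProduct.map fun _ : Fin n => p.1.toLinearMap)) ∧
      -- `ε ∘ λ = 0`
      (p.2.toLinearMap ∘ₗ lam = 0) ∧
      -- coassociativity
      ((TensorProduct.assoc k C C C).toLinearMap
          ∘ₗ (TensorProduct.map p.1.toLinearMap LinearMap.id) ∘ₗ p.1.toLinearMap
        = (TensorProduct.map LinearMap.id p.1.toLinearMap) ∘ₗ p.1.toLinearMap) ∧
      -- counit laws
      ((TensorProduct.lid k C).toLinearMap
          ∘ₗ (TensorProduct.map p.2.toLinearMap LinearMap.id) ∘ₗ p.1.toLinearMap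
        = LinearMap.id) ∧
      ((TensorProduct.rid k C).toLinearMap
          ∘ₗ (TensorProduct.map LinearMap.id p.2.toLinearMap) ∘ₗ p.1.toLinearMap
        = LinearMap.id) :=
  unique_bialgebra_structure_on_initial_general k n C lam hinit ε hε τ hτ σ₁ σ₂ Δ hΔ hσ₁ε hσ₂ε hσ₁Δ
    hσ₂Δ
end

section
/- The initial commutative n-algebras C_n, for varying n, form a simplicial algebra: the algebra homomorphisms d_i : C_n → C_{n−1} (0 ≤ i ≤ n) determined by d_0(λ_n)(x_1,…,x_n) = μ(x_1, λ_{n−1}(x_2,…,x_n)), d_i(λ_n)(x_1,…,x_n) = λ_{n−1}(x_1,…,μ(x_i,x_{i+1}),…,x_n) for 1 ≤ i ≤ n−1, d_n(λ_n)(x_1,…,x_n) = μ(λ_{n−1}(x_1,…,x_{n−1}), x_n), and the algebra homomorphisms s_i : C_n → C_{n+1} (0 ≤ i ≤ n) determined by s_i(λ_n)(x_1,…,x_n) = λ_{n+1}(x_1,…,x_i, 1, x_{i+1},…,x_n), satisfy the simplicial identities. -/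
/-!
Say that an algebra map `f : C_N → C_M` has *shape* `g : Fin N → Option (Fin M)` if
`f (λ_N x) = (∏_{g j = none} f x_j) · λ_M (∏_{g j = some l} f x_j)_l`.
The right-hand side is multilinear in `f ∘ x`, so it is a commutative `N`-algebra structure on
`C_M`, and by initiality of `C_N` at most one algebra map has a given shape. The defining
equations of `d_i` and `s_i` say that they have the shapes `p ↦ p` or `p - 1` and
`p ↦ p` or `p + 1`; a composite has the Kleisli composite of the shapes, and these partial maps
satisfy the simplicial identities, so the `d_i` and `s_i` do too.
-/

open scoped TensorProduct

open PiTensorProduct Finset Function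

section FiberProd

variable {ι κ κ' M : Type*} [Fintype ι] [DecidableEq κ] [CommMonoid M]

def fiberProd (σ : ι → κ) (y : ι → M) (b : κ) : M := ∏ j with σ j = b, y j

lemma fiberProd_eq_prod {σ : ι → κ} {b : κ} {s : Finset ι} (h : ∀ j, σ j = b ↔ j ∈ s)
    (y : ι → M) : fiberProd σ y b = ∏ j ∈ s, y j := by
  rw [fiberProd]
  congr 1
  ext j
  simp [h]

lemma fiberProd_eq_one {σ : ι → κ} {b : κ} (h : ∀ j, σ j ≠ b) (y : ι → M) :
    fiberProd σ y b = 1 :=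
  prod_eq_one fun j hj => absurd (mem_filter.mp hj).2 (h j)

lemma fiberProd_eq_apply {σ : ι → κ} {b : κ} {a : ι} (h : ∀ j, σ j = b ↔ j = a) (y : ι → M) :
    fiberProd σ y b = y a := by
  classical
  rw [fiberProd_eq_prod (s := {a}) (by simpa using h), prod_singleton]

lemma fiberProd_eq_mul {σ : ι → κ} {b : κ} {a a' : ι} (ha : a ≠ a')
    (h : ∀ j, σ j = b ↔ j = a ∨ j = a') (y : ι → M) : fiberProd σ y b = y a * y a' := by
  classical
  rw [fiberProd_eq_prod (s := {a, a'}) (by simpa using h), prod_pair ha]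

lemma fiberProd_fiberProd [Fintype κ] [DecidableEq κ'] (σ : ι → κ) (τ : κ → κ') (y : ι → M) :
    fiberProd τ (fiberProd σ y) = fiberProd (τ ∘ σ) y := by
  funext c
  simp only [fiberProd]
  rw [prod_fiberwise_eq_prod_filter]
  simp

lemma comp_fiberProd {M' F : Type*} [CommMonoid M'] [FunLike F M M'] [MonoidHomClass F M M']
    (φ : F) (σ : ι → κ) (y : ι → M) : φ ∘ fiberProd σ y = fiberProd σ (φ ∘ y) :=
  funext fun _ => map_prod φ _ _

lemma fiberProd_update [DecidableEq ι] (σ : ι → κ) (y : ι → M) (i : ι) (c : M) :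
    fiberProd σ (update y i c)
      = update (fiberProd σ y) (σ i) (c * ∏ j ∈ ({j | σ j = σ i} : Finset ι).erase i, y j) := by
  funext b
  rcases eq_or_ne b (σ i) with rfl | hb
  · rw [update_self, fiberProd, prod_update_of_mem (by simp), sdiff_singleton_eq_erase]
  · rw [update_of_ne hb, fiberProd, fiberProd, prod_update_of_notMem (by simpa using hb.symm)]

lemma fiberProd_bind_none {α β : Type*} [Fintype α] [DecidableEq β] (g : α → Option β)
    (w : Option α → M) :
    fiberProd (Option.bind · g) w none = w none * fiberProd g (w ∘ some) none := by
  simp [fiberProd, prod_filter, Fintype.prod_option]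

lemma fiberProd_bind_some {α β : Type*} [Fintype α] [DecidableEq β] (g : α → Option β)
    (w : Option α → M) (p : β) :
    fiberProd (Option.bind · g) w (some p) = fiberProd g (w ∘ some) (some p) := by
  simp [fiberProd, prod_filter, Fintype.prod_option]

end FiberProd

namespace MultilinearMap

variable {R A : Type*} [CommSemiring R] [CommSemiring A] [Algebra R A]

def compFiberProd {ι κ : Type*} [Fintype ι] [DecidableEq κ]
    (Φ : MultilinearMap R (fun _ : κ => A) A) (σ : ι → κ) :
    MultilinearMap R (fun _ : ι => A) A where
  toFun y := Φ (fiberProd σ y)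
  map_update_add' y i a b := by
    simp only [fiberProd_update, add_mul, Φ.map_update_add]
  map_update_smul' y i c a := by
    simp only [fiberProd_update, smul_mul_assoc, Φ.map_update_smul]

def optionMul {ι : Type*} (ψ : MultilinearMap R (fun _ : ι => A) A) :
    MultilinearMap R (fun _ : Option ι => A) A where
  toFun w := w none * ψ (w ∘ some)
  map_update_add' w i a b := by
    cases i with
    | none =>
      simp only [update_comp_eq_of_forall_ne _ _ (Option.some_ne_none ·), update_self, add_mul]
    | some l =>
      classical
      simp only [update_comp_eq_of_injective _ (Option.some_injective _), ψ.map_update_add,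
        update_of_ne (Option.some_ne_none l).symm, mul_add]
  map_update_smul' w i c a := by
    cases i with
    | none =>
      simp only [update_comp_eq_of_forall_ne _ _ (Option.some_ne_none ·), update_self,
        smul_mul_assoc]
    | some l =>
      classical
      simp only [update_comp_eq_of_injective _ (Option.some_injective _), ψ.map_update_smul,
        update_of_ne (Option.some_ne_none l).symm, mul_smul_comm]

end MultilinearMap

namespace CommNAlgebra

variable {k : Type} [CommRing k] {N M P : ℕ}

def shapeMap (C : CommNAlgebra k M) {ι : Type*} [Fintype ι]
    (g : ι → Option (Fin M)) : MultilinearMap k (fun _ : ι => C.carrier) C.carrier :=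
  (C.op.compMultilinearMap (tprod k)).optionMul.compFiberProd g

lemma shapeMap_apply (C : CommNAlgebra k M) {ι : Type*} [Fintype ι] (g : ι → Option (Fin M))
    (y : ι → C.carrier) :
    C.shapeMap g y = fiberProd g y none * C.op (tprod k fun l => fiberProd g y (some l)) := rfl

lemma shapeMap_fiberProd (C : CommNAlgebra k M) {ι κ : Type*} [Fintype ι] [Fintype κ]
    [DecidableEq κ] (g : κ → Option (Fin M)) (σ : ι → κ) (y : ι → C.carrier) :
    C.shapeMap g (fiberProd σ y) = C.shapeMap (g ∘ σ) y := by
  rw [shapeMap_apply, shapeMap_apply, fiberProd_fiberProd]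

def IsInitial (C : CommNAlgebra k N) : Prop :=
  ∀ A : CommNAlgebra k N, ∃! f : C.carrier →ₐ[k] A.carrier,
    A.op ∘ₗ map (fun _ => f.toLinearMap) = f.toLinearMap ∘ₗ C.op

def HasShape {C : CommNAlgebra k N} {D : CommNAlgebra k M} (f : C.carrier →ₐ[k] D.carrier)
    (g : Fin N → Option (Fin M)) : Prop :=
  ∀ x : Fin N → C.carrier, f (C.op (tprod k x)) = D.shapeMap g (f ∘ x)

section Shape

variable {C : CommNAlgebra k N} {D : CommNAlgebra k M} {E : CommNAlgebra k P}

lemma hasShape_id : HasShape (AlgHom.id k C.carrier) some := by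
  intro x
  simp [shapeMap_apply, fiberProd, filter_eq']

lemma HasShape.comp {f : D.carrier →ₐ[k] E.carrier} {f' : C.carrier →ₐ[k] D.carrier}
    {g : Fin M → Option (Fin P)} {g' : Fin N → Option (Fin M)}
    (hf : HasShape f g) (hf' : HasShape f' g') :
    HasShape (f.comp f') (fun j => (g' j).bind g) := by
  have key : ∀ w : Option (Fin M) → D.carrier,
      f (w none * D.op (tprod k (w ∘ some))) = E.shapeMap (Option.bind · g) (f ∘ w) := by
    intro w
    rw [map_mul, hf, shapeMap_apply, shapeMap_apply, fiberProd_bind_none, mul_assoc]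
    simp only [fiberProd_bind_some]
    rfl
  intro x
  calc f (f' (C.op (tprod k x)))
      = f (fiberProd g' (f' ∘ x) none * D.op (tprod k (fiberProd g' (f' ∘ x) ∘ some))) := by
        rw [hf']; rfl
    _ = E.shapeMap (Option.bind · g) (fiberProd g' (f ∘ f' ∘ x)) := by
        rw [key, comp_fiberProd]
    _ = E.shapeMap (fun j => (g' j).bind g) ((f.comp f') ∘ x) := shapeMap_fiberProd ..

lemma hasShape_iff {f : C.carrier →ₐ[k] D.carrier} {g : Fin N → Option (Fin M)} :
    HasShape f g ↔
      lift (D.shapeMap g) ∘ₗ map (fun _ => f.toLinearMap) = f.toLinearMap ∘ₗ C.op := by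
  rw [PiTensorProduct.ext_iff, MultilinearMap.ext_iff]
  simp only [LinearMap.compMultilinearMap_apply, LinearMap.comp_apply, map_tprod, lift.tprod,
    AlgHom.toLinearMap_apply]
  exact forall_congr' fun _ => eq_comm

lemma HasShape.unique (hC : C.IsInitial) {f f' : C.carrier →ₐ[k] D.carrier}
    {g : Fin N → Option (Fin M)} (hf : HasShape f g) (hf' : HasShape f' g) : f = f' :=
  (hC ⟨D.carrier, lift (D.shapeMap g)⟩).unique (hasShape_iff.mp hf) (hasShape_iff.mp hf')

end Shape

/-- Argument `p` of `λ_{m+1}` goes to slot `p` (for `p < i`) or `p - 1` of `λ_m`; when that slot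
does not exist (`p = 0 = i` or `p = m < i`) it is multiplied outside `λ_m` instead. -/
def faceShape (m i : ℕ) (p : Fin (m + 1)) : Option (Fin m) :=
  if (p : ℕ) < i then (if h : (p : ℕ) < m then some ⟨p, h⟩ else none)
  else if h : 0 < (p : ℕ) then some ⟨p - 1, by omega⟩ else none

def degenShape (m i : ℕ) (p : Fin m) : Option (Fin (m + 1)) :=
  some (if h : (p : ℕ) < i then ⟨p, by omega⟩ else ⟨p + 1, by omega⟩)

lemma faceShape_eq_none_iff {m i : ℕ} {p : Fin (m + 1)} :
    faceShape m i p = none ↔ (i = 0 ∧ (p : ℕ) = 0) ∨ (m < i ∧ (p : ℕ) = m) := by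
  have := p.isLt
  unfold faceShape
  split_ifs <;> simp only [false_iff, true_iff] <;> omega

lemma faceShape_eq_some_iff {m i : ℕ} {p : Fin (m + 1)} {l : Fin m} :
    faceShape m i p = some l ↔ ((p : ℕ) < i ∧ (p : ℕ) = l) ∨ (i ≤ p ∧ (p : ℕ) = l + 1) := by
  have := l.isLt
  unfold faceShape
  split_ifs <;> simp only [false_iff, Option.some.injEq, Fin.ext_iff] <;> omega

lemma degenShape_eq_some_iff {m i : ℕ} {p : Fin m} {l : Fin (m + 1)} :
    degenShape m i p = some l ↔ ((p : ℕ) < i ∧ (l : ℕ) = p) ∨ (i ≤ p ∧ (l : ℕ) = p + 1) := by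
  unfold degenShape
  split_ifs <;> simp only [Option.some.injEq, Fin.ext_iff] <;> omega

lemma hasShape_faceShape_zero {m : ℕ} {C : CommNAlgebra k (m + 1)} {D : CommNAlgebra k m}
    {f : C.carrier →ₐ[k] D.carrier}
    (hf : ∀ x : Fin (m + 1) → C.carrier,
      f (C.op (tprod k x)) = f (x 0) * D.op (tprod k fun j : Fin m => f (x j.succ))) :
    HasShape f (faceShape m 0) := by
  intro x
  rw [hf, shapeMap_apply, fiberProd_eq_apply (a := 0) (fun j => by
    rw [faceShape_eq_none_iff, Fin.ext_iff, Fin.val_zero]; omega)]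
  congr 3
  funext l
  refine (fiberProd_eq_apply (a := l.succ) (fun j => ?_) (f ∘ x)).symm
  rw [faceShape_eq_some_iff, Fin.ext_iff, Fin.val_succ]
  omega

lemma hasShape_faceShape_last {m : ℕ} {C : CommNAlgebra k (m + 1)} {D : CommNAlgebra k m}
    {f : C.carrier →ₐ[k] D.carrier}
    (hf : ∀ x : Fin (m + 1) → C.carrier,
      f (C.op (tprod k x))
        = D.op (tprod k fun j : Fin m => f (x j.castSucc)) * f (x (Fin.last m))) :
    HasShape f (faceShape m (m + 1)) := by
  intro x
  rw [hf, shapeMap_apply, mul_comm, fiberProd_eq_apply (a := Fin.last m) (fun j => by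
    rw [faceShape_eq_none_iff, Fin.ext_iff, Fin.val_last]; omega)]
  congr 3
  funext l
  refine (fiberProd_eq_apply (a := l.castSucc) (fun j => ?_) (f ∘ x)).symm
  rw [faceShape_eq_some_iff, Fin.ext_iff, Fin.val_castSucc]
  omega

lemma hasShape_faceShape_of_pos {m i : ℕ} (hi₀ : 1 ≤ i) (hi : i ≤ m)
    {C : CommNAlgebra k (m + 1)} {D : CommNAlgebra k m} {f : C.carrier →ₐ[k] D.carrier}
    (hf : ∀ x : Fin (m + 1) → C.carrier,
      f (C.op (tprod k x)) = D.op (tprod k fun j : Fin m =>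
        if (j : ℕ) < i - 1 then f (x j.castSucc)
        else if (j : ℕ) = i - 1 then f (x j.castSucc) * f (x j.succ)
        else f (x j.succ))) :
    HasShape f (faceShape m i) := by
  intro x
  rw [hf, shapeMap_apply, fiberProd_eq_one (fun j => by rw [Ne, faceShape_eq_none_iff]; omega),
    one_mul]
  congr 3
  funext l
  split_ifs with h₁ h₂
  · refine (fiberProd_eq_apply (a := l.castSucc) (fun j => ?_) (f ∘ x)).symm
    rw [faceShape_eq_some_iff, Fin.ext_iff, Fin.val_castSucc]
    omega
  · refine (fiberProd_eq_mul Fin.castSucc_lt_succ.ne (fun j => ?_) (f ∘ x)).symm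
    rw [faceShape_eq_some_iff, Fin.ext_iff, Fin.ext_iff, Fin.val_castSucc, Fin.val_succ]
    omega
  · refine (fiberProd_eq_apply (a := l.succ) (fun j => ?_) (f ∘ x)).symm
    rw [faceShape_eq_some_iff, Fin.ext_iff, Fin.val_succ]
    omega

lemma hasShape_degenShape {m i : ℕ} (hi : i ≤ m)
    {C : CommNAlgebra k m} {D : CommNAlgebra k (m + 1)} {f : C.carrier →ₐ[k] D.carrier}
    (hf : ∀ x : Fin m → C.carrier,
      f (C.op (tprod k x)) = D.op (tprod k fun j : Fin (m + 1) =>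
        if h : (j : ℕ) < i then f (x ⟨j, h.trans_le hi⟩)
        else if h' : (j : ℕ) = i then 1
        else f (x ⟨j - 1, Nat.sub_one_lt_of_le
          (Nat.zero_lt_of_lt ((not_lt.mp h).lt_of_ne' h')) (Nat.lt_succ_iff.mp j.isLt)⟩))) :
    HasShape f (degenShape m i) := by
  intro x
  rw [hf, shapeMap_apply, fiberProd_eq_one (fun j => by simp [degenShape]), one_mul]
  congr 3
  funext l
  split_ifs with h₁ h₂
  · refine (fiberProd_eq_apply (a := (⟨l, by omega⟩ : Fin m)) (fun j => ?_) (f ∘ x)).symm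
    simp only [degenShape_eq_some_iff, Fin.ext_iff]
    omega
  · refine (fiberProd_eq_one (σ := degenShape m i) (b := some l) (fun j => ?_) (f ∘ x)).symm
    rw [Ne, degenShape_eq_some_iff]
    omega
  · refine (fiberProd_eq_apply (a := (⟨l - 1, by omega⟩ : Fin m)) (fun j => ?_) (f ∘ x)).symm
    simp only [degenShape_eq_some_iff, Fin.ext_iff]
    omega

lemma faceShape_bind_faceShape {m i j : ℕ} (hij : i < j) :
    (fun p => (faceShape (m + 1) j p).bind (faceShape m i))
      = fun p => (faceShape (m + 1) i p).bind (faceShape m (j - 1)) := by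
  funext p
  have := p.isLt
  unfold faceShape
  split_ifs <;> simp only [Option.bind_some, Option.bind_none] <;> (try split_ifs) <;>
    (try simp only [Option.some.injEq, Fin.ext_iff]) <;> omega

lemma degenShape_bind_degenShape {m i j : ℕ} (hij : i ≤ j) :
    (fun p => (degenShape m j p).bind (degenShape (m + 1) i))
      = fun p => (degenShape m i p).bind (degenShape (m + 1) (j + 1)) := by
  funext p
  unfold degenShape
  split_ifs <;> simp only [Option.bind_some] <;> split_ifs <;>
    simp only [Option.some.injEq, Fin.ext_iff] <;> omega

lemma degenShape_bind_faceShape_of_lt {m i j : ℕ} (hij : i < j) (hj : j ≤ m + 1) :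
    (fun p => (degenShape (m + 1) j p).bind (faceShape (m + 1) i))
      = fun p => (faceShape m i p).bind (degenShape m (j - 1)) := by
  funext p
  have := p.isLt
  unfold faceShape degenShape
  split_ifs <;> simp only [Option.bind_some, Option.bind_none] <;> (try split_ifs) <;>
    (try simp only [Option.some.injEq, Fin.ext_iff]) <;> omega

lemma degenShape_bind_faceShape_self (m j : ℕ) :
    (fun p => (degenShape m j p).bind (faceShape m j)) = some := by
  funext p
  have := p.isLt
  unfold faceShape degenShape
  split_ifs <;> simp only [Option.bind_some] <;> (try split_ifs) <;>
    (try simp only [Option.some.injEq, Fin.ext_iff]) <;> omega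

lemma degenShape_bind_faceShape_succ (m j : ℕ) :
    (fun p => (degenShape m j p).bind (faceShape m (j + 1))) = some := by
  funext p
  have := p.isLt
  unfold faceShape degenShape
  split_ifs <;> simp only [Option.bind_some] <;> (try split_ifs) <;>
    (try simp only [Option.some.injEq, Fin.ext_iff]) <;> omega

lemma degenShape_bind_faceShape_of_gt {m i j : ℕ} (hij : j + 1 < i) (hi : i ≤ m + 2) :
    (fun p => (degenShape (m + 1) j p).bind (faceShape (m + 1) i))
      = fun p => (faceShape m (i - 1) p).bind (degenShape m j) := by
  funext p
  have := p.isLt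
  unfold faceShape degenShape
  split_ifs <;> simp only [Option.bind_some, Option.bind_none] <;> (try split_ifs) <;>
    (try simp only [Option.some.injEq, Fin.ext_iff]) <;> omega

end CommNAlgebra

open CommNAlgebra

open PiTensorProduct in
/-- The initial commutative `n`-algebras `C_n` (for varying
`n`) form a simplicial algebra: the algebra homomorphisms
`d_i : C_n → C_{n-1}` (`0 ≤ i ≤ n`) and `s_i : C_n → C_{n+1}` (`0 ≤ i ≤ n`)
determined (via initiality) by
`d_0(λ_n)(x_1,…,x_n) = μ(x_1, λ_{n-1}(x_2,…,x_n))`,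
`d_i(λ_n)(x_1,…,x_n) = λ_{n-1}(x_1,…,μ(x_i,x_{i+1}),…,x_n)` (`1 ≤ i ≤ n-1`),
`d_n(λ_n)(x_1,…,x_n) = μ(λ_{n-1}(x_1,…,x_{n-1}),x_n)` and
`s_i(λ_n)(x_1,…,x_n) = λ_{n+1}(x_1,…,x_i,1,x_{i+1},…,x_n)`
satisfy the simplicial identities.  (Here, in `0`-indexed form, `C (m+1)` has
the faces `d m i : C (m+1) → C m` for `i ≤ m+1` and the degeneracies
`s m i : C m → C (m+1)` for `i ≤ m`.) -/
theorem initial_commNAlgebras_form_simplicial_algebra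
    (k : Type) [Field k]
    (C : (m : ℕ) → CommNAlgebra k m)
    -- each `(C_m, λ_m)` is initial
    (hinit : ∀ (m : ℕ) (A : CommNAlgebra k m),
      ∃! f : (C m).carrier →ₐ[k] A.carrier,
        A.op ∘ₗ (PiTensorProduct.map fun _ : Fin m => f.toLinearMap)
          = f.toLinearMap ∘ₗ (C m).op)
    -- face maps
    (d : (m : ℕ) → ℕ → ((C (m+1)).carrier →ₐ[k] (C m).carrier))
    -- degeneracy maps
    (s : (m : ℕ) → ℕ → ((C m).carrier →ₐ[k] (C (m+1)).carrier))
    -- `d_0(λ)(x_0,…,x_m) = μ(d_0 x_0, λ(d_0 x_1, …, d_0 x_m))`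
    (hd0 : ∀ (m : ℕ) (x : Fin (m+1) → (C (m+1)).carrier),
      d m 0 ((C (m+1)).op (tprod k x))
        = d m 0 (x 0) * (C m).op (tprod k fun j : Fin m => d m 0 (x j.succ)))
    -- inner faces: merge the `(i-1)`-st and `i`-th arguments (`1 ≤ i ≤ m`)
    (hdmid : ∀ (m i : ℕ), 1 ≤ i → i ≤ m → ∀ x : Fin (m+1) → (C (m+1)).carrier,
      d m i ((C (m+1)).op (tprod k x))
        = (C m).op (tprod k fun j : Fin m =>
            if (j : ℕ) < i - 1 then d m i (x j.castSucc)
            else if (j : ℕ) = i - 1 then d m i (x j.castSucc) * d m i (x j.succ)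
            else d m i (x j.succ)))
    -- `d_{m+1}(λ)(x_0,…,x_m) = μ(λ(d x_0, …, d x_{m-1}), d x_m)`
    (hdlast : ∀ (m : ℕ) (x : Fin (m+1) → (C (m+1)).carrier),
      d m (m+1) ((C (m+1)).op (tprod k x))
        = (C m).op (tprod k fun j : Fin m => d m (m+1) (x j.castSucc))
            * d m (m+1) (x (Fin.last m)))
    -- degeneracies insert a `1` in position `i` (`0 ≤ i ≤ m`)
    (hs : ∀ (m i : ℕ) (hi : i ≤ m) (x : Fin m → (C m).carrier),
      s m i ((C m).op (tprod k x))
        = (C (m+1)).op (tprod k fun j : Fin (m+1) =>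
            if h : (j : ℕ) < i then s m i (x ⟨(j : ℕ), by omega⟩)
            else if h' : (j : ℕ) = i then 1
            else s m i (x ⟨(j : ℕ) - 1, by have := j.isLt; omega⟩))) :
    -- the simplicial identities
    (∀ (m i j : ℕ), i < j → j ≤ m + 2 →
      (d m i).comp (d (m+1) j) = (d m (j-1)).comp (d (m+1) i)) ∧
    (∀ (m i j : ℕ), i ≤ j → j ≤ m →
      (s (m+1) i).comp (s m j) = (s (m+1) (j+1)).comp (s m i)) ∧
    (∀ (m i j : ℕ), i < j → j ≤ m + 1 →
      (d (m+1) i).comp (s (m+1) j) = (s m (j-1)).comp (d m i)) ∧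
    (∀ (m j : ℕ), j ≤ m →
      (d m j).comp (s m j) = AlgHom.id k (C m).carrier ∧
      (d m (j+1)).comp (s m j) = AlgHom.id k (C m).carrier) ∧
    (∀ (m i j : ℕ), j + 1 < i → i ≤ m + 2 → j ≤ m + 1 →
      (d (m+1) i).comp (s (m+1) j) = (s m j).comp (d m (i-1))) := by
  have face : ∀ m i, i ≤ m + 1 → HasShape (d m i) (faceShape m i) := by
    intro m i hi
    rcases Nat.eq_zero_or_pos i with rfl | hi₀
    · exact hasShape_faceShape_zero (hd0 m)
    rcases hi.lt_or_eq with hi | rfl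
    · exact hasShape_faceShape_of_pos hi₀ (by omega) (hdmid m i hi₀ (by omega))
    · exact hasShape_faceShape_last (hdlast m)
  have degen : ∀ m i, i ≤ m → HasShape (s m i) (degenShape m i) :=
    fun m i hi => hasShape_degenShape hi (hs m i hi)
  have eq_of_shape : ∀ {N M} {f f' : (C N).carrier →ₐ[k] (C M).carrier} {g g'},
      HasShape f g → HasShape f' g' → g = g' → f = f' := by
    rintro N M f f' g _ hf hf' rfl
    exact hf.unique (hinit N) hf'
  refine ⟨fun m i j hij hj => ?_, fun m i j hij hj => ?_, fun m i j hij hj => ?_,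
    fun m j hj => ⟨?_, ?_⟩, fun m i j hij hi hj => ?_⟩
  · exact eq_of_shape ((face m i (by omega)).comp (face (m+1) j hj))
      ((face m (j-1) (by omega)).comp (face (m+1) i (by omega)))
      (faceShape_bind_faceShape hij)
  · exact eq_of_shape ((degen (m+1) i (by omega)).comp (degen m j hj))
      ((degen (m+1) (j+1) (by omega)).comp (degen m i (by omega)))
      (degenShape_bind_degenShape hij)
  · exact eq_of_shape ((face (m+1) i (by omega)).comp (degen (m+1) j hj))
      ((degen m (j-1) (by omega)).comp (face m i (by omega)))
      (degenShape_bind_faceShape_of_lt hij hj)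
  · exact eq_of_shape ((face m j (by omega)).comp (degen m j hj)) hasShape_id
      (degenShape_bind_faceShape_self m j)
  · exact eq_of_shape ((face m (j+1) (by omega)).comp (degen m j hj)) hasShape_id
      (degenShape_bind_faceShape_succ m j)
  · exact eq_of_shape ((face (m+1) i hi).comp (degen (m+1) j hj))
      ((degen m j (by omega)).comp (face m (i-1) (by omega)))
      (degenShape_bind_faceShape_of_gt hij hi)
end
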